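/- arXiv:1602.01264 — 3 statements merged into one kernel-verified Lean document; each statement's English description precedes it below -/
import Mathlib

section
/- If κ is a μ-supercompact cardinal, μ > κ is regular, S ⊆ E^μ_{<κ} is stationary, and A is an algebra on μ with fewer than κ operations, then there exists a set X generating a subalgebra B of A such that the order type of B equals the order type of X, this order type is a regular cardinal below κ, and S ∩ B is stationary in sup(B). -/
/-- `β` is an accumulation point of `C`. -/
def accPts (C : Set Ordinal) : Set Ordinal :=
  {β | 0 < β ∧ ∀ x < β, ∃ y ∈ C, x < y ∧ y < β}

/-- `C` is a closed unbounded subset of the ordinal `σ`. -/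
def IsClubIn (C : Set Ordinal) (σ : Ordinal) : Prop :=
  C ⊆ Set.Iio σ ∧ (∀ α < σ, ∃ β ∈ C, α ≤ β) ∧ ∀ α < σ, α ∈ accPts C → α ∈ C

/-- `S` is stationary in the ordinal `σ`. -/
def IsStatIn (S : Set Ordinal) (σ : Ordinal) : Prop :=
  ∀ C, IsClubIn C σ → (S ∩ C).Nonempty

/-- `P_κ(μ)`: subsets of `μ` of size `< κ`. -/
def Pk (κ μ : Cardinal.{0}) :=
  {x : Set Ordinal // x ⊆ Set.Iio μ.ord ∧ Cardinal.mk ↥x < Cardinal.lift.{1} κ}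

/-- `U` is a normal, fine, `κ`-complete ultrafilter on `P_κ(μ)`; the existence of such an
ultrafilter is equivalent to `κ` being `μ`-supercompact. -/
def IsNormalFineUF (κ μ : Cardinal) (U : Set (Set (Pk κ μ))) : Prop :=
  Set.univ ∈ U ∧ ∅ ∉ U ∧
  (∀ A B : Set (Pk κ μ), A ∈ U → A ⊆ B → B ∈ U) ∧
  (∀ A B : Set (Pk κ μ), A ∈ U → B ∈ U → A ∩ B ∈ U) ∧
  (∀ A : Set (Pk κ μ), A ∈ U ∨ (Set.univ \ A) ∈ U) ∧
  -- κ-completeness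
  (∀ o : Ordinal, o < κ.ord → ∀ f : Ordinal → Set (Pk κ μ),
    (∀ i, i < o → f i ∈ U) → {x | ∀ i, i < o → x ∈ f i} ∈ U) ∧
  -- fineness
  (∀ α, α < μ.ord → {x : Pk κ μ | α ∈ x.val} ∈ U) ∧
  -- normality: every choice function is constant on a large set
  (∀ F : Pk κ μ → Ordinal, {x | F x ∈ x.val} ∈ U → ∃ α, {x | F x = α} ∈ U)

/-- `B` is closed under all the operations of the algebra. -/
def ClosedUnderOps {ι : Type} (n : ι → ℕ) (f : ∀ i, (Fin (n i) → Ordinal) → Ordinal)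
    (B : Set Ordinal) : Prop :=
  ∀ i (v : Fin (n i) → Ordinal), (∀ j, v j ∈ B) → f i v ∈ B

/-- `B` is the subalgebra generated by `X`. -/
def GeneratedBy {ι : Type} (n : ι → ℕ) (f : ∀ i, (Fin (n i) → Ordinal) → Ordinal)
    (X B : Set Ordinal) : Prop :=
  X ⊆ B ∧ ClosedUnderOps n f B ∧ ∀ B', X ⊆ B' → ClosedUnderOps n f B' → B ⊆ B'

/-- The order type of a set of ordinals. -/
noncomputable def SetOType (s : Set Ordinal) : Ordinal.{1} :=
  Ordinal.type (Subrel ((· < ·) : Ordinal → Ordinal → Prop) (· ∈ s))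

/-!
Fix a normal fine `κ`-complete ultrafilter `𝒰` on `P_κ(μ)`; then `X = B = x` works for
`𝒰`-almost every `x`. Closure under the operations comes from diagonal intersections and
`κ`-completeness. If the order type of `x` were singular almost everywhere, pressing down would give
a fixed `β` such that `x ∩ β` maps cofinally into `x` for almost every `x`; normality freezes
these maps pointwise, leaving fewer than `μ` values that would have to be cofinal in `μ`. If clubs
`C_x ⊆ sup x` avoided `S ∩ x` almost everywhere, the set of `α` lying in almost every `C_x` would
be unbounded in `μ` and closed under limits of cofinality `< κ`, so it would meet `S`, at a point
of `S ∩ x ∩ C_x` for some `x`.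
-/

universe u

open Cardinal Set Filter

theorem Cardinal.IsRegular.sSup_lt_ord {μ : Cardinal.{u}} (hμ : μ.IsRegular) {s : Set Ordinal.{u}}
    (hs : #s < Cardinal.lift.{u + 1} μ) (hsμ : s ⊆ Iio μ.ord) : sSup s < μ.ord :=
  Ordinal.sSup_lt_of_lt_cof (by rwa [← Ordinal.lift_cof, hμ.cof_ord]) hsμ

def MapsIioCofinally (k : Ordinal → Ordinal) (s : Set Ordinal) (β : Ordinal) : Prop :=
  MapsTo k (s ∩ Iio β) s ∧ ∀ b ∈ s, ∃ γ ∈ s ∩ Iio β, b ≤ k γ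

theorem exists_mapsIioCofinally_of_cof_ord_lt {s : Set Ordinal}
    (h : (SetOType s).cof.ord < SetOType s) : ∃ β ∈ s, ∃ k, MapsIioCofinally k s β := by
  classical
  obtain ⟨y, hy, hycard⟩ := Order.exists_cof_eq s
  obtain ⟨β, hβ⟩ := Ordinal.typein_surj _ h
  have hcard : #{z : s // z < β} = #y := by
    have htypein := Ordinal.card_typein (r := ((· < ·) : s → s → Prop)) β
    rw [show Ordinal.typein (α := s) (· < ·) β = _ from hβ, card_ord] at htypein
    rw [hycard, ← Ordinal.cof_type s]
    exact htypein.symm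
  obtain ⟨e⟩ := Cardinal.eq.1 hcard
  let k : Ordinal → Ordinal := fun γ =>
    if hγ : γ ∈ s ∧ γ < β.1 then (e ⟨⟨γ, hγ.1⟩, hγ.2⟩).1 else 0
  refine ⟨β, β.2, k, fun γ hγ => ?_, fun b hb => ?_⟩
  · simp only [k, dif_pos (show γ ∈ s ∧ γ < β.1 from hγ)]
    exact (e _).1.2
  · obtain ⟨u, hu, hbu⟩ := hy ⟨b, hb⟩
    refine ⟨(e.symm ⟨u, hu⟩).1, ⟨(e.symm ⟨u, hu⟩).1.2, (e.symm ⟨u, hu⟩).2⟩, ?_⟩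
    simpa [k, (e.symm ⟨u, hu⟩).2] using Subtype.coe_le_coe.2 hbu

theorem accPts_union_accPts_subset (E : Set Ordinal) (σ : Ordinal) :
    accPts (E ∪ accPts E ∩ Iio σ) ⊆ accPts E := by
  rintro a ⟨ha0, ha⟩
  refine ⟨ha0, fun t ht => ?_⟩
  obtain ⟨y, hy | hy, hty, hya⟩ := ha t ht
  · exact ⟨y, hy, hty, hya⟩
  · obtain ⟨z, hz, htz, hzy⟩ := hy.1.2 t hty
    exact ⟨z, hz, htz, hzy.trans hya⟩

theorem IsStatIn.inter_nonempty_of_cof_lt {S E : Set Ordinal} {σ : Ordinal} {κ : Cardinal}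
    (hS : IsStatIn S σ) (hScof : ∀ α ∈ S, α.cof < κ) (hE : E ⊆ Iio σ)
    (hEunb : ∀ b < σ, ∃ a ∈ E, b ≤ a) (hEcl : ∀ a < σ, a ∈ accPts E → a.cof < κ → a ∈ E) :
    (S ∩ E).Nonempty := by
  have hclub : IsClubIn (E ∪ accPts E ∩ Iio σ) σ :=
    ⟨union_subset hE inter_subset_right,
      fun b hb => (hEunb b hb).imp fun a ha => ⟨Or.inl ha.1, ha.2⟩,
      fun a ha hacc => Or.inr ⟨accPts_union_accPts_subset E σ hacc, ha⟩⟩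
  obtain ⟨α, hαS, hαE | hαacc⟩ := hS _ hclub
  · exact ⟨α, hαS, hαE⟩
  · exact ⟨α, hαS, hEcl α hαacc.2 hαacc.1 (hScof α hαS)⟩

theorem iSup_mem_accPts {a c : ℕ → Ordinal.{u}} {C : Set Ordinal.{u}} (hc : ∀ m, c m ∈ C)
    (hac : ∀ m, a m ≤ c m) (hca : ∀ m, c m < a (m + 1)) : ⨆ m, a m ∈ accPts C := by
  have hlt : ∀ m, c m < ⨆ m, a m := fun m => (hca m).trans_le (Ordinal.le_iSup a _)
  refine ⟨zero_le.trans_lt (hlt 0), fun t ht => ?_⟩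
  obtain ⟨m, hm⟩ := Ordinal.lt_iSup_iff.1 ht
  exact ⟨c m, hc m, hm.trans_le (hac m), hlt m⟩

theorem Ordinal.exists_cofinal_family (a : Ordinal.{u}) :
    ∃ (ι : Type u) (e : ι → Ordinal.{u}), #ι = a.cof ∧ (∀ i, e i < a) ∧ ∀ t < a, ∃ i, t ≤ e i := by
  obtain ⟨s, hs, hcard⟩ := Order.exists_cof_eq a.ToType
  refine ⟨s, fun i => (Ordinal.ToType.mk.symm i.1).1, by rw [hcard, Ordinal.cof_toType],
    fun i => (Ordinal.ToType.mk.symm i.1).2, fun t ht => ?_⟩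
  obtain ⟨u, hu, htu⟩ := hs (Ordinal.ToType.mk ⟨t, ht⟩)
  exact ⟨⟨u, hu⟩, by simpa using Subtype.coe_le_coe.2 (Ordinal.ToType.mk.symm.monotone htu)⟩

theorem Pk.sSup_le_ord {κ μ : Cardinal} (x : Pk κ μ) : sSup x.val ≤ μ.ord :=
  csSup_le' fun _ h => (x.2.1 h).le

namespace IsNormalFineUF

variable {κ μ : Cardinal.{0}} {U : Set (Set (Pk κ μ))} (hU : IsNormalFineUF κ μ U)
include hU

def ultrafilter : Ultrafilter (Pk κ μ) :=
  Ultrafilter.ofComplNotMemIff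
    { sets := U
      univ_sets := hU.1
      sets_of_superset := hU.2.2.1 _ _
      inter_sets := hU.2.2.2.1 _ _ }
    fun s => by
      refine ⟨fun h => (hU.2.2.2.2.1 s).resolve_right (by rwa [← compl_eq_univ_sdiff]),
        fun h hc => hU.2.1 (by simpa using hU.2.2.2.1 _ _ h hc)⟩

local notation "𝒰" => (IsNormalFineUF.ultrafilter hU : Filter (Pk κ μ))

theorem eventually_mem {α : Ordinal} (hα : α < μ.ord) : ∀ᶠ x in 𝒰, α ∈ x.val :=
  hU.2.2.2.2.2.2.1 α hα

theorem eventually_forall_of_mk_lt {ι : Type} (hι : #ι < κ) {p : ι → Pk κ μ → Prop}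
    (h : ∀ i, ∀ᶠ x in 𝒰, p i x) : ∀ᶠ x in 𝒰, ∀ i, p i x := by
  obtain ⟨r, _, hr⟩ := Cardinal.exists_ord_eq ι
  have hcomplete := hU.2.2.2.2.2.1 (Ordinal.type r) (hr ▸ Cardinal.ord_lt_ord.2 hι)
    (fun j x => ∀ i, Ordinal.typein r i = j → p i x) fun j hj => by
      obtain ⟨i₀, rfl⟩ := Ordinal.typein_surj r hj
      filter_upwards [h i₀] with x hx i hi
      rwa [Ordinal.typein_injective r hi]
  filter_upwards [hcomplete] with x hx i using hx _ (Ordinal.typein_lt_type r i) i rfl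

theorem exists_eventually_eq {F : Pk κ μ → Ordinal} (h : ∀ᶠ x in 𝒰, F x ∈ x.val) :
    ∃ α, ∀ᶠ x in 𝒰, F x = α :=
  hU.2.2.2.2.2.2.2 F h

theorem lt_ord_of_eventually_mem {α : Ordinal} (h : ∀ᶠ x in 𝒰, α ∈ x.val) : α < μ.ord :=
  let ⟨x, hx⟩ := h.exists
  x.2.1 hx

/-- Pressing down (Fodor's lemma for `P_κ(μ)`). -/
theorem exists_eventually_of_eventually_exists_mem {P : Pk κ μ → Ordinal → Prop}
    (h : ∀ᶠ x in 𝒰, ∃ α ∈ x.val, P x α) : ∃ α, ∀ᶠ x in 𝒰, α ∈ x.val ∧ P x α := by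
  choose! F hFmem hFP using fun x (hx : ∃ α ∈ x.val, P x α) => hx
  obtain ⟨α, hα⟩ := hU.exists_eventually_eq (h.mono hFmem)
  refine ⟨α, ?_⟩
  filter_upwards [h, hα] with x hx hxα
  exact hxα ▸ ⟨hFmem x hx, hFP x hx⟩

theorem eventually_forall_mem {p : Ordinal → Pk κ μ → Prop}
    (h : ∀ α < μ.ord, ∀ᶠ x in 𝒰, p α x) : ∀ᶠ x in 𝒰, ∀ α ∈ x.val, p α x := by
  by_contra hcon
  rw [← Ultrafilter.eventually_not] at hcon
  push Not at hcon
  obtain ⟨α, hα⟩ := hU.exists_eventually_of_eventually_exists_mem hcon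
  have hαμ := hU.lt_ord_of_eventually_mem (hα.mono fun _ => And.left)
  obtain ⟨x, hx, hpx⟩ := (hα.and (h α hαμ)).exists
  exact hx.2 hpx

theorem eventually_forall_fin_mem {m : ℕ} {p : (Fin m → Ordinal) → Pk κ μ → Prop}
    (h : ∀ v : Fin m → Ordinal, (∀ j, v j < μ.ord) → ∀ᶠ x in 𝒰, p v x) :
    ∀ᶠ x in 𝒰, ∀ v : Fin m → Ordinal, (∀ j, v j ∈ x.val) → p v x := by
  induction m with
  | zero =>
    filter_upwards [h Fin.elim0 fun j => j.elim0] with x hx v _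
    exact Subsingleton.elim v _ ▸ hx
  | succ m ih =>
    have hcons := hU.eventually_forall_mem fun α hα => ih (p := fun v => p (Fin.cons α v))
      fun v hv => h _ (Fin.cases hα hv)
    filter_upwards [hcons] with x hx v hv
    simpa using hx (v 0) (hv 0) (Fin.tail v) fun j => hv j.succ

theorem eventually_closedUnderOps {ι : Type} (hι : #ι < κ) (n : ι → ℕ)
    (f : ∀ i, (Fin (n i) → Ordinal) → Ordinal)
    (hf : ∀ i v, (∀ j, v j < μ.ord) → f i v < μ.ord) :
    ∀ᶠ x in 𝒰, ClosedUnderOps n f x.val :=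
  hU.eventually_forall_of_mk_lt hι fun i =>
    hU.eventually_forall_fin_mem fun v hv => hU.eventually_mem (hf i v hv)

theorem eventually_infinite (hμ : ℵ₀ ≤ μ) : ∀ᶠ x in 𝒰, x.val.Infinite := by
  have hlim := Cardinal.isSuccLimit_ord hμ
  have hsucc := hU.eventually_forall_mem fun α hα => hU.eventually_mem (hlim.succ_lt hα)
  filter_upwards [hsucc, hU.eventually_mem hlim.bot_lt] with x hx h0
  intro hfin
  obtain ⟨m, hm⟩ := hfin.exists_maximal ⟨_, h0⟩
  exact (Order.lt_succ m).not_ge (hm.2 (hx m hm.1) (Order.le_succ m))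

theorem aleph0_lt (hμ : ℵ₀ ≤ μ) : ℵ₀ < κ := by
  obtain ⟨x, hx⟩ := (hU.eventually_infinite hμ).exists
  have := hx.to_subtype
  simpa using (aleph0_le_mk x.val).trans_lt x.2.2

theorem not_eventually_exists_mapsIioCofinally (hμ : μ.IsRegular) {β : Ordinal}
    (hβ : β < μ.ord) : ¬∀ᶠ x in 𝒰, ∃ k, MapsIioCofinally k x.val β := by
  intro h
  choose! k hk using fun (x : Pk κ μ) (hx : ∃ k, MapsIioCofinally k x.val β) => hx
  replace hk := h.mono hk
  have hlim := isSuccLimit_ord hμ.aleph0_le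
  have hK : ∀ γ, ∃ δ < μ.ord, (∀ᶠ x in 𝒰, γ ∈ x.val) → γ < β → ∀ᶠ x in 𝒰, k x γ = δ := by
    intro γ
    by_cases hγ : (∀ᶠ x in 𝒰, γ ∈ x.val) ∧ γ < β
    · have hkγ : ∀ᶠ x in 𝒰, k x γ ∈ x.val := by
        filter_upwards [hk, hγ.1] with x hx hxγ using hx.1 ⟨hxγ, hγ.2⟩
      obtain ⟨δ, hδ⟩ := hU.exists_eventually_eq hkγ
      refine ⟨δ, hU.lt_ord_of_eventually_mem ?_, fun _ _ => hδ⟩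
      filter_upwards [hkγ, hδ] with x hx hxδ using hxδ ▸ hx
    · exact ⟨0, hlim.bot_lt, fun h h' => absurd ⟨h, h'⟩ hγ⟩
  choose K hKlt hK using hK
  set ζ := sSup (K '' Iio β)
  have hζ : ζ < μ.ord := by
    refine hμ.sSup_lt_ord (mk_image_le.trans_lt ?_) (by rintro _ ⟨γ, -, rfl⟩; exact hKlt γ)
    rw [Cardinal.mk_Iio_ordinal, lift_lt]
    exact lt_ord.1 hβ
  obtain ⟨γ, hγ⟩ := hU.exists_eventually_of_eventually_exists_mem
    (P := fun x γ => γ < β ∧ ζ < k x γ) <| by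
      filter_upwards [hk, hU.eventually_mem (hlim.succ_lt hζ)] with x hx hxζ
      obtain ⟨γ, hγ, hle⟩ := hx.2 _ hxζ
      exact ⟨γ, hγ.1, hγ.2, (Order.lt_succ ζ).trans_le hle⟩
  obtain ⟨-, hγβ, -⟩ := hγ.exists.choose_spec
  have hKζ : K γ ≤ ζ := le_csSup ⟨μ.ord, by rintro _ ⟨γ, -, rfl⟩; exact (hKlt γ).le⟩ ⟨γ, hγβ, rfl⟩
  obtain ⟨x, ⟨-, -, hζk⟩, hkK⟩ := (hγ.and (hK γ (hγ.mono fun _ => And.left) hγβ)).exists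
  exact (hζk.trans_le (hkK ▸ hKζ)).false

theorem eventually_cof_ord_eq (hμ : μ.IsRegular) :
    ∀ᶠ x in 𝒰, (SetOType x.val).cof.ord = SetOType x.val := by
  by_contra hcon
  rw [← Ultrafilter.eventually_not] at hcon
  obtain ⟨β, hβ⟩ := hU.exists_eventually_of_eventually_exists_mem <|
    hcon.mono fun x hx => exists_mapsIioCofinally_of_cof_ord_lt ((Ordinal.ord_cof_le _).lt_of_ne hx)
  exact hU.not_eventually_exists_mapsIioCofinally hμ
    (hU.lt_ord_of_eventually_mem (hβ.mono fun _ => And.left)) (hβ.mono fun _ => And.right)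

theorem eventually_lt_sSup (hμ : ℵ₀ ≤ μ) {a : Ordinal} (ha : a < μ.ord) :
    ∀ᶠ x in 𝒰, a < sSup x.val := by
  filter_upwards [hU.eventually_mem ((isSuccLimit_ord hμ).succ_lt ha)] with x hx
  exact (Order.lt_succ a).trans_le (le_csSup ⟨μ.ord, fun _ h => (x.2.1 h).le⟩ hx)

section Clubs

variable {C : Pk κ μ → Set Ordinal}
  (hC : ∀ᶠ x in (hU.ultrafilter : Filter (Pk κ μ)), IsClubIn (C x) (sSup x.val))
include hC

theorem eventually_mem_of_mem_accPts (hμ : ℵ₀ ≤ μ) {a : Ordinal} (ha : a < μ.ord)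
    (hacc : a ∈ accPts {d | ∀ᶠ x in 𝒰, d ∈ C x}) (hcof : a.cof < κ) : ∀ᶠ x in 𝒰, a ∈ C x := by
  obtain ⟨ι, e, hι, he, he_cof⟩ := Ordinal.exists_cofinal_family a
  choose d hd hed hda using fun i => hacc.2 (e i) (he i)
  filter_upwards [hC, hU.eventually_forall_of_mk_lt (hι ▸ hcof) hd, hU.eventually_lt_sSup hμ ha]
    with x hCx hdx hax
  refine hCx.2.2 a hax ⟨hacc.1, fun t ht => ?_⟩
  obtain ⟨i, hti⟩ := he_cof t ht
  exact ⟨d i, hdx i, hti.trans_lt (hed i), hda i⟩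

-- Since `a ≤ c a x < next a` almost everywhere, the `ω`-th iterate of `next` is almost everywhere
-- a limit of points of `C x`.
theorem exists_eventually_mem_ge (hμ : μ.IsRegular) (hκμ : κ < μ) {b : Ordinal}
    (hb : b < μ.ord) : ∃ a, b ≤ a ∧ a < μ.ord ∧ ∀ᶠ x in 𝒰, a ∈ C x := by
  have hlim := isSuccLimit_ord hμ.aleph0_le
  let c : Ordinal → Pk κ μ → Ordinal := fun a x => sInf {d ∈ C x | a ≤ d}
  have hc : ∀ a < μ.ord, ∀ᶠ x in 𝒰, c a x ∈ C x ∧ a ≤ c a x := fun a ha => by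
    filter_upwards [hC, hU.eventually_lt_sSup hμ.aleph0_le ha] with x hCx hax
    exact csInf_mem (hCx.2.1 a hax)
  have hnext : ∀ a < μ.ord, ∃ a', a < a' ∧ a' < μ.ord ∧ ∀ᶠ x in 𝒰, c a x < a' := fun a ha => by
    obtain ⟨e, he⟩ :=
        hU.exists_eventually_of_eventually_exists_mem (P := fun x e => c a x < e) <| by
      filter_upwards [hC, hc a ha] with x hCx hcx
      exact exists_lt_of_lt_csSup' (hCx.1 hcx.1)
    refine ⟨max (Order.succ a) e, (Order.lt_succ a).trans_le (le_max_left _ _),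
      max_lt (hlim.succ_lt ha) (hU.lt_ord_of_eventually_mem (he.mono fun _ => And.left)),
      he.mono fun x hx => hx.2.trans_le (le_max_right _ _)⟩
  choose! next hnext using hnext
  let a : ℕ → Ordinal := fun m => next^[m] b
  have ha_succ : ∀ m, a (m + 1) = next (a m) := fun m => Function.iterate_succ_apply' next m b
  have ha : ∀ m, a m < μ.ord := by
    intro m
    induction m with
    | zero => exact hb
    | succ m ih => exact ha_succ m ▸ (hnext _ ih).2.1
  have hω := hU.aleph0_lt hμ.aleph0_le
  have hsup : ⨆ m, a m < μ.ord :=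
    Ordinal.iSup_lt_of_lt_cof (by rw [hμ.cof_ord, mk_nat]; exact hω.trans hκμ) ha
  refine ⟨⨆ m, a m, Ordinal.le_iSup a 0, hsup, ?_⟩
  have hseq := hU.eventually_forall_of_mk_lt (by rwa [mk_nat])
    fun m => (hc _ (ha m)).and (hnext _ (ha m)).2.2
  filter_upwards [hC, hseq, hU.eventually_lt_sSup hμ.aleph0_le hsup] with x hCx hx hxsup
  exact hCx.2.2 _ hxsup <| iSup_mem_accPts (fun m => (hx m).1.1) (fun m => (hx m).1.2)
    fun m => ha_succ m ▸ (hx m).2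

end Clubs

theorem eventually_isStatIn (hμ : μ.IsRegular) (hκμ : κ < μ) {S : Set Ordinal}
    (hScof : ∀ α ∈ S, α.cof < κ) (hS : IsStatIn S μ.ord) :
    ∀ᶠ x in 𝒰, IsStatIn (S ∩ x.val) (sSup x.val) := by
  by_contra hcon
  rw [← Ultrafilter.eventually_not] at hcon
  simp only [IsStatIn, not_forall, not_nonempty_iff_eq_empty, exists_prop] at hcon
  choose! C hC hCS using
    fun (x : Pk κ μ) (hx : ∃ C, IsClubIn C (sSup x.val) ∧ S ∩ x.val ∩ C = ∅) => hx
  replace hC := hcon.mono hC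
  have hD : ∀ d, (∀ᶠ x in 𝒰, d ∈ C x) → d < μ.ord := fun d hd =>
    let ⟨x, hdx, hCx⟩ := (hd.and hC).exists
    (hCx.1 hdx).trans_le x.sSup_le_ord
  obtain ⟨α, hαS, hαC⟩ := hS.inter_nonempty_of_cof_lt (E := {d | ∀ᶠ x in 𝒰, d ∈ C x}) hScof
    hD
    (fun b hb => let ⟨a, hba, _, ha⟩ := hU.exists_eventually_mem_ge hC hμ hκμ hb; ⟨a, ha, hba⟩)
    fun _ ha hacc hcof => hU.eventually_mem_of_mem_accPts hC hμ.aleph0_le ha hacc hcof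
  obtain ⟨x, ⟨hαx, hαCx⟩, hSxC⟩ :=
    (((hU.eventually_mem (hD α hαC)).and hαC).and (hcon.mono hCS)).exists
  exact (eq_empty_iff_forall_notMem.1 hSxC) α ⟨⟨hαS, hαx⟩, hαCx⟩

end IsNormalFineUF

theorem exists_isRegular_of_cof_ord_eq {κ : Cardinal.{0}} {s : Set Ordinal.{0}}
    (hreg : (SetOType s).cof.ord = SetOType s) (hinf : s.Infinite)
    (hs : #s < Cardinal.lift.{1} κ) :
    ∃ c : Cardinal.{0}, c.IsRegular ∧ c < κ ∧ SetOType s = Ordinal.lift.{1} c.ord := by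
  obtain ⟨c, hcκ, hc⟩ := Cardinal.lt_lift_iff.1 hs
  have hcof : (SetOType s).cof = #s := by
    rw [← Cardinal.card_ord (SetOType s).cof, hreg]
    exact Ordinal.card_type _
  have hτ : SetOType s = Ordinal.lift.{1} c.ord := by
    rw [← hreg, hcof, ← hc, Cardinal.lift_ord]
  have := hinf.to_subtype
  refine ⟨c, ⟨aleph0_le_lift.1 (hc ▸ aleph0_le_mk s), le_of_eq ?_⟩, hcκ, hτ⟩
  apply Cardinal.lift_injective.{1}
  rw [Ordinal.lift_cof, ← hτ, hcof, hc]

theorem stmt2_general (κ μ : Cardinal) (hμ : μ.IsRegular) (hκμ : κ < μ)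
    (hsc : ∃ U : Set (Set (Pk κ μ)), IsNormalFineUF κ μ U)
    (ι : Type) (hι : Cardinal.mk ι < κ)
    (n : ι → ℕ) (f : ∀ i, (Fin (n i) → Ordinal) → Ordinal)
    (hf : ∀ i v, (∀ j, v j < μ.ord) → f i v < μ.ord)
    (S : Set Ordinal)
    (hScof : ∀ α ∈ S, Ordinal.cof α < κ)
    (hSstat : IsStatIn S μ.ord) :
    ∃ X B : Set Ordinal, X ⊆ Set.Iio μ.ord ∧ B ⊆ Set.Iio μ.ord ∧
      GeneratedBy n f X B ∧
      SetOType B = SetOType X ∧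
      (∃ c : Cardinal, c.IsRegular ∧ c < κ ∧ SetOType B = Ordinal.lift.{1} c.ord) ∧
      IsStatIn (S ∩ B) (sSup B) := by
  obtain ⟨U, hU⟩ := hsc
  obtain ⟨x, ⟨⟨hclosed, hreg⟩, hinf⟩, hstat⟩ :=
    (((hU.eventually_closedUnderOps hι n f hf).and (hU.eventually_cof_ord_eq hμ)).and
      (hU.eventually_infinite hμ.aleph0_le)).and (hU.eventually_isStatIn hμ hκμ hScof hSstat)
      |>.exists
  exact ⟨x.val, x.val, x.2.1, x.2.1, ⟨subset_rfl, hclosed, fun _ h _ => h⟩, rfl,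
    exists_isRegular_of_cof_ord_eq hreg hinf x.2.2, hstat⟩

/-- If `κ` is `μ`-supercompact, `μ > κ` is regular, `S ⊆ E^μ_{<κ}` is stationary and `A` is
an algebra on `μ` with fewer than `κ` operations, then there is a set `X` generating a
subalgebra `B` with `o.t.(B) = o.t.(X)` a regular cardinal below `κ`, such that `S ∩ B` is
stationary in `sup B`. -/
theorem stmt2 (κ μ : Cardinal) (hμ : μ.IsRegular) (hκμ : κ < μ)
    (hsc : ∃ U : Set (Set (Pk κ μ)), IsNormalFineUF κ μ U)
    (ι : Type) (hι : Cardinal.mk ι < κ)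
    (n : ι → ℕ) (f : ∀ i, (Fin (n i) → Ordinal) → Ordinal)
    (hf : ∀ i v, (∀ j, v j < μ.ord) → f i v < μ.ord)
    (S : Set Ordinal) (hSsub : S ⊆ Set.Iio μ.ord)
    (hScof : ∀ α ∈ S, Ordinal.cof α < κ)
    (hSstat : IsStatIn S μ.ord) :
    ∃ X B : Set Ordinal, X ⊆ Set.Iio μ.ord ∧ B ⊆ Set.Iio μ.ord ∧
      GeneratedBy n f X B ∧
      SetOType B = SetOType X ∧
      (∃ c : Cardinal, c.IsRegular ∧ c < κ ∧ SetOType B = Ordinal.lift.{1} c.ord) ∧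
      IsStatIn (S ∩ B) (sSup B) :=
  stmt2_general κ μ hμ hκμ hsc ι hι n f hf S hScof hSstat
end

section
/- Let C be a □(κ) sequence and B a κ-c.c. forcing notion. Then C remains a □(κ) sequence after forcing with B; in particular B adds no thread to C. -/
/-- An abstract forcing notion: a preorder with a maximal element. -/
structure ForcingNotion where
  P : Type
  le : P → P → Prop
  top : P
  le_refl : ∀ p, le p p
  le_trans : ∀ p q r, le p q → le q r → le p r
  le_top : ∀ p, le p top

/-- Given a name for a set of ordinals presented by its membership relation `N`
("`N r α` iff `r ⊩ α̌ ∈ Ṅ`"), `p` forces `α ∈ Ṅ` iff densely many extensions of `p`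
witness it. -/
def ForcingNotion.forcesMem (F : ForcingNotion) (N : F.P → Ordinal → Prop)
    (p : F.P) (α : Ordinal) : Prop :=
  ∀ q, F.le q p → ∃ r, F.le r q ∧ N r α

/-- `p` forces `α ∉ Ṅ`: no extension of `p` puts `α` into the name. -/
def ForcingNotion.forcesNotMem (F : ForcingNotion) (N : F.P → Ordinal → Prop)
    (p : F.P) (α : Ordinal) : Prop :=
  ∀ q, F.le q p → ¬ N q α

/-- A name for a club subset of `σ`, presented by its membership forcing relation:
monotone, concentrated below `σ`, forced unbounded, and closed. -/
structure ClubName (F : ForcingNotion) (σ : Ordinal) where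
  N : F.P → Ordinal → Prop
  mono : ∀ p q α, F.le q p → N p α → N q α
  lt : ∀ p α, N p α → α < σ
  unbdd : ∀ p : F.P, ∀ β, β < σ → ∃ q, F.le q p ∧ ∃ α, β ≤ α ∧ N q α
  closed : ∀ p α, 0 < α → α < σ → (∀ x, x < α → ∃ y, x < y ∧ y < α ∧ N p y) → N p α

/-- `q` forces that the ground-model set `S` remains stationary in `σ`: every name for a
club of `σ` is forced, densely below `q`, to meet `S`. -/
def ForcesStat (F : ForcingNotion) (q : F.P) (S : Set Ordinal) (σ : Ordinal) : Prop :=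
  ∀ D : ClubName F σ, ∀ p, F.le p q → ∃ r, F.le r p ∧ ∃ α ∈ S, D.N r α

/-- `F` generically preserves stationary subsets of `σ`: for every stationary `S` some
condition forces `S` to remain stationary. -/
def GenPres (F : ForcingNotion) (σ : Ordinal) : Prop :=
  ∀ S : Set Ordinal, S ⊆ Set.Iio σ → IsStatIn S σ → ∃ q, ForcesStat F q S σ

/-- `F` is `κ`-c.c.: every antichain has size `< κ`. -/
def KCC (F : ForcingNotion) (κ : Cardinal) : Prop :=
  ∀ A : Set F.P, (∀ p ∈ A, ∀ q ∈ A, p ≠ q → ∀ r, ¬ (F.le r p ∧ F.le r q)) →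
    Cardinal.mk ↥A < κ

/-- A coherent sequence on `σ`. -/
def IsCoherentSeq (σ : Ordinal) (Cs : Ordinal → Set Ordinal) : Prop :=
  (∀ α, α < σ → 0 < α → IsClubIn (Cs α) α) ∧
  (∀ α, α < σ → ∀ β ∈ accPts (Cs α), Cs α ∩ Set.Iio β = Cs β)

/-- `D` is a thread through the coherent sequence `Cs`. -/
def IsThread (σ : Ordinal) (Cs : Ordinal → Set Ordinal) (D : Set Ordinal) : Prop :=
  IsClubIn D σ ∧ ∀ α ∈ accPts D, α < σ → D ∩ Set.Iio α = Cs α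

/-- `Cs` is a `□(σ)` sequence: coherent with no thread. -/
def IsSquareSeq (σ : Ordinal) (Cs : Ordinal → Set Ordinal) : Prop :=
  IsCoherentSeq σ Cs ∧ ¬ ∃ D : Set Ordinal, IsThread σ Cs D

namespace ForcingNotion

variable (F : ForcingNotion)

def Incompatible (p q : F.P) : Prop :=
  ∀ r, ¬ (F.le r p ∧ F.le r q)

def IsAntichain (A : Set F.P) : Prop :=
  A.Pairwise F.Incompatible

/-- `p` forces `α ∈ acc Ṅ` for the name `Ṅ` with membership relation `N`. -/
def forcesAcc (N : F.P → Ordinal → Prop) (p : F.P) (α : Ordinal) : Prop :=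
  ∀ x, x < α → ∀ q, F.le q p → ∃ r, F.le r q ∧ ∃ y, x < y ∧ y < α ∧ N r y

variable {F}

theorem Incompatible.symm {p q : F.P} (h : F.Incompatible p q) : F.Incompatible q p :=
  fun r hr => h r hr.symm

theorem exists_isAntichain_subset_predense {S : Set F.P}
    (hS : ∀ q, ∃ r, F.le r q ∧ r ∈ S) :
    ∃ A ⊆ S, F.IsAntichain A ∧ ∀ q, ∃ a ∈ A, ∃ s, F.le s q ∧ F.le s a := by
  obtain ⟨A, hA⟩ := zorn_subset {A | A ⊆ S ∧ F.IsAntichain A} fun c hc hchain =>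
    ⟨⋃₀ c, ⟨Set.sUnion_subset fun A hA => (hc hA).1,
      (Set.pairwise_sUnion hchain.directedOn).2 fun A hA => (hc hA).2⟩,
      fun _ => Set.subset_sUnion_of_mem⟩
  refine ⟨A, hA.prop.1, hA.prop.2, fun q => ?_⟩
  obtain ⟨r, hrq, hrS⟩ := hS q
  by_contra hcomp
  have hr : ∀ a ∈ A, F.Incompatible r a := fun a ha s hs =>
    hcomp ⟨a, ha, s, F.le_trans s r q hs.1 hrq, hs.2⟩
  have hins : insert r A ∈ {A | A ⊆ S ∧ F.IsAntichain A} :=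
    ⟨Set.insert_subset hrS hA.prop.1,
      hA.prop.2.insert fun a ha _ => ⟨hr a ha, (hr a ha).symm⟩⟩
  have hrA : r ∈ A := hA.2 hins (Set.subset_insert r A) (Set.mem_insert r A)
  exact hr r hrA r ⟨F.le_refl r, F.le_refl r⟩

end ForcingNotion

open ForcingNotion

theorem KCC.exists_bound {F : ForcingNotion} {κ : Cardinal} (hκ : κ.IsRegular)
    (hcc : KCC F κ) {R : F.P → Ordinal → Prop} (hmono : ∀ p q y, F.le q p → R p y → R q y)
    (hR : ∀ p, ∃ q, F.le q p ∧ ∃ y < κ.ord, R q y) :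
    ∃ δ < κ.ord, ∀ p, ∃ q, F.le q p ∧ ∃ y < δ, R q y := by
  obtain ⟨A, hAS, hA, hApre⟩ := F.exists_isAntichain_subset_predense
    (S := {q | ∃ y < κ.ord, R q y}) hR
  choose y hyκ hy using fun a : A => hAS a.2
  refine ⟨⨆ a, y a + 1, ?_, fun p => ?_⟩
  · exact Ordinal.iSup_add_one_lt_of_lt_cof (by rw [hκ.cof_ord]; exact hcc A hA) hyκ
  · obtain ⟨a, ha, s, hsp, hsa⟩ := hApre p
    exact ⟨s, hsp, y ⟨a, ha⟩, (Order.lt_add_one_iff.2 le_rfl).trans_le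
      (Ordinal.le_iSup (fun a => y a + 1) ⟨a, ha⟩), hmono a s _ hsa (hy ⟨a, ha⟩)⟩

theorem KCC.exists_gt_forcesAcc_top {F : ForcingNotion} {κ : Cardinal} (hκ : κ.IsRegular)
    (hκω : Cardinal.aleph0 < κ) (hcc : KCC F κ) {N : F.P → Ordinal → Prop}
    (hmono : ∀ p q α, F.le q p → N p α → N q α) (hlt : ∀ p α, N p α → α < κ.ord)
    (hunbdd : ∀ p : F.P, ∀ β, β < κ.ord → ∃ q, F.le q p ∧ ∃ α, β ≤ α ∧ N q α)
    {β : Ordinal} (hβ : β < κ.ord) :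
    ∃ α, β < α ∧ α < κ.ord ∧ F.forcesAcc N F.top α := by
  have step : ∀ γ < κ.ord, ∃ δ < κ.ord, ∀ p, ∃ q, F.le q p ∧ ∃ y < δ, γ ≤ y ∧ N q y :=
    fun γ hγ => hcc.exists_bound hκ (R := fun q y => γ ≤ y ∧ N q y)
      (fun p q y hqp hy => ⟨hy.1, hmono p q y hqp hy.2⟩) fun p => by
        obtain ⟨q, hqp, y, hγy, hy⟩ := hunbdd p γ hγ
        exact ⟨q, hqp, y, hlt q y hy, hγy, hy⟩
  choose! f hfκ hf using step
  have hακ : Ordinal.nfp f (β + 1) < κ.ord :=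
    Cardinal.nfp_lt_ord_of_isRegular hκ hκω.ne' hfκ
      ((Cardinal.isSuccLimit_ord hκ.aleph0_le).add_one_lt hβ)
  refine ⟨Ordinal.nfp f (β + 1),
    (Order.lt_add_one_iff.2 le_rfl).trans_le (Ordinal.le_nfp f _), hακ, ?_⟩
  intro x hx q _
  obtain ⟨n, hn⟩ := Ordinal.lt_nfp_iff.1 hx
  obtain ⟨r, hrq, y, hyδ, hγy, hy⟩ :=
    hf _ ((Ordinal.iterate_le_nfp f _ n).trans_lt hακ) q
  refine ⟨r, hrq, y, hn.trans_le hγy, hyδ.trans_le ?_, hy⟩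
  simpa only [Function.iterate_succ_apply'] using Ordinal.iterate_le_nfp f (β + 1) (n + 1)

theorem inter_Iio_eq_of_forces {F : ForcingNotion} {N : F.P → Ordinal → Prop} {C : Set Ordinal}
    {α : Ordinal} (hC : C ⊆ Set.Iio α)
    (hN : ∀ β, β < α → (β ∈ C → F.forcesMem N F.top β) ∧ (β ∉ C → F.forcesNotMem N F.top β)) :
    {β | ∃ q, N q β} ∩ Set.Iio α = C := by
  ext β
  constructor
  · rintro ⟨⟨q, hq⟩, hβ⟩
    by_contra hβC
    exact (hN β hβ).2 hβC q (F.le_top q) hq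
  · intro hβC
    have hβ : β < α := hC hβC
    obtain ⟨r, -, hr⟩ := (hN β hβ).1 hβC F.top (F.le_refl _)
    exact ⟨⟨r, hr⟩, hβ⟩

theorem mem_accPts_inter_Iio {D : Set Ordinal} {ξ α : Ordinal} (hξ : ξ ∈ accPts D)
    (hξα : ξ < α) : ξ ∈ accPts (D ∩ Set.Iio α) := by
  refine ⟨hξ.1, fun x hx => ?_⟩
  obtain ⟨y, hyD, hxy, hyξ⟩ := hξ.2 x hx
  exact ⟨y, ⟨hyD, hyξ.trans hξα⟩, hxy, hyξ⟩

theorem IsCoherentSeq.isThread_of_inter_Iio_eq {σ : Ordinal} {Cs : Ordinal → Set Ordinal}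
    {D : Set Ordinal} (hCs : IsCoherentSeq σ Cs) (hD : D ⊆ Set.Iio σ)
    (hagree : ∀ β < σ, ∃ α, β < α ∧ α < σ ∧ D ∩ Set.Iio α = Cs α) :
    IsThread σ Cs D := by
  have hacc : ∀ ξ ∈ accPts D, ξ < σ →
      ∃ α, ξ < α ∧ α < σ ∧ D ∩ Set.Iio α = Cs α ∧ ξ ∈ accPts (Cs α) := by
    intro ξ hξ hξσ
    obtain ⟨α, hξα, hασ, hDα⟩ := hagree ξ hξσ
    exact ⟨α, hξα, hασ, hDα, hDα ▸ mem_accPts_inter_Iio hξ hξα⟩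
  refine ⟨⟨hD, fun β hβ => ?_, fun ξ hξσ hξ => ?_⟩, fun ξ hξ hξσ => ?_⟩
  · obtain ⟨α, hβα, hασ, hDα⟩ := hagree β hβ
    obtain ⟨γ, hγ, hβγ⟩ := (hCs.1 α hασ (pos_of_gt hβα)).2.1 β hβα
    rw [← hDα] at hγ
    exact ⟨γ, hγ.1, hβγ⟩
  · obtain ⟨α, hξα, hασ, hDα, hξCα⟩ := hacc ξ hξ hξσ
    have hξC : ξ ∈ Cs α := (hCs.1 α hασ (pos_of_gt hξα)).2.2 ξ hξα hξCα
    rw [← hDα] at hξC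
    exact hξC.1
  · obtain ⟨α, hξα, hασ, hDα, hξCα⟩ := hacc ξ hξ hξσ
    rw [← hCs.2 α hασ ξ hξCα, ← hDα, Set.inter_assoc, Set.Iio_inter_Iio, min_eq_right hξα.le]

/-- Let `Cs` be a `□(κ)` sequence and `F` a `κ`-c.c. forcing.  Then `Cs` remains a `□(κ)`
sequence after forcing with `F`: it stays coherent, and there can be no `F`-name `Ṅ`
(presented by its membership relation, monotone, forced to be a club of `κ` coherent with
`Cs` at its accumulation points) for a thread through `Cs`. -/
theorem stmt8 (κ : Cardinal) (hκ : κ.IsRegular) (hκω : Cardinal.aleph0 < κ)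
    (Cs : Ordinal → Set Ordinal) (hsq : IsSquareSeq κ.ord Cs)
    (F : ForcingNotion) (hcc : KCC F κ) :
    IsCoherentSeq κ.ord Cs ∧
    ¬ ∃ N : F.P → Ordinal → Prop,
        (∀ p q α, F.le q p → N p α → N q α) ∧
        (∀ p α, N p α → α < κ.ord) ∧
        -- forced unbounded in κ
        (∀ p : F.P, ∀ β, β < κ.ord → ∃ q, F.le q p ∧ ∃ α, β ≤ α ∧ N q α) ∧
        -- forced closed
        (∀ p α, 0 < α → α < κ.ord →
          (∀ x, x < α → ∃ y, x < y ∧ y < α ∧ N p y) → N p α) ∧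
        -- forced to cohere with `Cs`: if `p ⊩ α ∈ acc Ṅ` then `p ⊩ Ṅ ∩ α = C_α`
        (∀ p α, α < κ.ord →
          (∀ x, x < α → ∀ q, F.le q p → ∃ r, F.le r q ∧ ∃ y, x < y ∧ y < α ∧ N r y) →
          ∀ β, β < α →
            (β ∈ Cs α → F.forcesMem N p β) ∧ (β ∉ Cs α → F.forcesNotMem N p β)) := by
  obtain ⟨hCs, hno_thread⟩ := hsq
  refine ⟨hCs, ?_⟩
  rintro ⟨N, hmono, hlt, hunbdd, -, hN⟩
  refine hno_thread ⟨{β | ∃ q, N q β}, hCs.isThread_of_inter_Iio_eq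
    (fun β ⟨q, hq⟩ => hlt q β hq) fun β hβ => ?_⟩
  obtain ⟨α, hβα, hακ, hα⟩ := hcc.exists_gt_forcesAcc_top hκ hκω hmono hlt hunbdd hβ
  exact ⟨α, hβα, hακ, inter_Iio_eq_of_forces (hCs.1 α hακ (pos_of_gt hβα)).1
    (hN F.top α hακ hα)⟩
end

section
/- Let T be a forcing whose generic filter, viewed as the union of its conditions, determines a fresh subset of κ (cofinal, with all initial segments in the ground model, where each initial segment up to a point of the thread is itself a condition), and let B be a forcing such that T × B does not change the cofinality of κ. Then B forces that T is κ-distributive. -/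
/-- `c` end-extends `d`. -/
def EndExt (c d : Set Ordinal) : Prop := d ⊆ c ∧ c ∩ Set.Iic (sSup d) = d

/-- The order on the product of the threading forcing `T` with `B`. -/
def PairLe (B : ForcingNotion) (q p : Set Ordinal × B.P) : Prop :=
  EndExt q.1 p.1 ∧ B.le q.2 p.2

lemma my_inter_Iic_sSup {c : Set Ordinal} (h : BddAbove c) : c ∩ Set.Iic (sSup c) = c :=
  Set.inter_eq_self_of_subset_left fun _ hx => le_csSup h hx

lemma my_endext_refl {c : Set Ordinal} (h : BddAbove c) : EndExt c c :=
  ⟨subset_rfl, my_inter_Iic_sSup h⟩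

lemma my_restrict_eq {a b : Set Ordinal} (h : EndExt a b) {β : Ordinal} (hβ : β ≤ sSup b) :
    a ∩ Set.Iic β = b ∩ Set.Iic β := by
  ext x; simp only [Set.mem_inter_iff, Set.mem_Iic]
  constructor
  · rintro ⟨hxa, hxβ⟩
    have hx : x ∈ a ∩ Set.Iic (sSup b) := ⟨hxa, hxβ.trans hβ⟩
    rw [h.2] at hx
    exact ⟨hx, hxβ⟩
  · rintro ⟨hxb, hxβ⟩; exact ⟨h.1 hxb, hxβ⟩

lemma my_endext_restrict {c : Set Ordinal} (h : BddAbove c) (β : Ordinal) :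
    EndExt c (c ∩ Set.Iic β) := by
  refine ⟨Set.inter_subset_left, ?_⟩
  have hs : sSup (c ∩ Set.Iic β) ≤ β := csSup_le' (fun y hy => hy.2)
  ext x; simp only [Set.mem_inter_iff, Set.mem_Iic]
  constructor
  · rintro ⟨hx, hxs⟩; exact ⟨hx, hxs.trans hs⟩
  · rintro ⟨hx, hxβ⟩
    exact ⟨hx, le_csSup (h.mono Set.inter_subset_left) ⟨hx, hxβ⟩⟩

lemma my_endext_trans {a b c : Set Ordinal} (ha : BddAbove a) (hab : EndExt a b)
    (hbc : EndExt b c) : EndExt a c := by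
  have hb : BddAbove b := ha.mono hab.1
  have hscb : sSup c ≤ sSup b := csSup_le_csSup' hb hbc.1
  refine ⟨hbc.1.trans hab.1, ?_⟩
  calc a ∩ Set.Iic (sSup c) = (a ∩ Set.Iic (sSup b)) ∩ Set.Iic (sSup c) := by
        rw [Set.inter_assoc, Set.Iic_inter_Iic, min_eq_right hscb]
    _ = b ∩ Set.Iic (sSup c) := by rw [hab.2]
    _ = c := hbc.2

/-- The auxiliary name: `GName κ B γ g r i β` says `β` is least such that the restriction
of `r.1` to `Set.Iic β` decides the `i`-th value (no smaller restriction can decide below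
any extension of the `B`-part). -/
def GName.{u, v} (κ : Cardinal.{u}) (B : ForcingNotion) (γ : Ordinal.{u})
    (g : (Set Ordinal.{u} × B.P) → Ordinal.{u} → Ordinal.{v} → Prop)
    (r : Set Ordinal.{u} × B.P) (i β : Ordinal.{u}) : Prop :=
  i < γ ∧ β < κ.ord ∧ β ≤ sSup r.1 ∧ (∃ β', g (r.1 ∩ Set.Iic β, r.2) i β') ∧
    ∀ β'' < β, ∀ b', B.le b' r.2 → ¬ ∃ β', g (r.1 ∩ Set.Iic β'', b') i β'

/-- Let `T` be the threading forcing for a square sequence on the regular cardinal `κ`: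
conditions `Cond` are closed bounded subsets of `κ`, ordered by end-extension, such that
any condition can be extended arbitrarily high (so the generic union is a fresh club) and
every initial segment of a condition below one of its points is again a condition.  Let
`B` be a forcing such that `T × B` does not change the cofinality of `κ` (every name for a
short sequence into `κ` is forced bounded).  Then `B` forces `T` to be `κ`-distributive:
for every `T × B`-name for a sequence of ordinals of length `γ < κ`, densely, the values
are decided by the `B`-coordinate alone (hence the sequence lies in `V^B`). -/
theorem stmt11 (κ : Cardinal) (hκ : κ.IsRegular)
    (Cond : Set (Set Ordinal))
    (hconds : ∀ c ∈ Cond, c ⊆ Set.Iio κ.ord ∧ sSup c < κ.ord ∧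
      ∀ β ∈ accPts c, β ≤ sSup c → β ∈ c)
    (hext : ∀ c ∈ Cond, ∀ β, β < κ.ord → ∃ d ∈ Cond, EndExt d c ∧ β ≤ sSup d)
    (hinit : ∀ c ∈ Cond, ∀ β ∈ c, c ∩ Set.Iio β ∈ Cond)
    (B : ForcingNotion)
    -- `T × B` does not change the cofinality of `κ`
    (hcof : ∀ γ, γ < κ.ord → ∀ g : (Set Ordinal × B.P) → Ordinal → Ordinal → Prop,
      (∀ q p i β, q.1 ∈ Cond → p.1 ∈ Cond → PairLe B q p → g p i β → g q i β) →
      (∀ q i β, g q i β → i < γ ∧ β < κ.ord) →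
      (∀ q i β β', g q i β → g q i β' → β = β') →
      (∀ q, q.1 ∈ Cond → ∀ i, i < γ →
        ∃ r, r.1 ∈ Cond ∧ PairLe B r q ∧ ∃ β, g r i β) →
      ∀ p, p.1 ∈ Cond → ∃ q, q.1 ∈ Cond ∧ PairLe B q p ∧ ∃ δ, δ < κ.ord ∧
        ∀ r i β, r.1 ∈ Cond → PairLe B r q → g r i β → β < δ) :
    -- `B` forces that `T` is `κ`-distributive
    ∀ γ, γ < κ.ord → ∀ g : (Set Ordinal × B.P) → Ordinal → Ordinal → Prop,
      (∀ q p i β, q.1 ∈ Cond → p.1 ∈ Cond → PairLe B q p → g p i β → g q i β) →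
      (∀ q i β, g q i β → i < γ) →
      (∀ q i β β', g q i β → g q i β' → β = β') →
      (∀ q, q.1 ∈ Cond → ∀ i, i < γ →
        ∃ r, r.1 ∈ Cond ∧ PairLe B r q ∧ ∃ β, g r i β) →
      ∀ p, p.1 ∈ Cond → ∃ q, q.1 ∈ Cond ∧ PairLe B q p ∧
        ∀ i, i < γ → ∀ c₁ c₂ b β₁ β₂, c₁ ∈ Cond → c₂ ∈ Cond →
          PairLe B (c₁, b) q → PairLe B (c₂, b) q →
          g (c₁, b) i β₁ → g (c₂, b) i β₂ → β₁ = β₂ := by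

  intro γ hγ g hmono hlt huniq hdense p hp
  have hbdd : ∀ c ∈ Cond, BddAbove c :=
    fun c hc => ⟨κ.ord, fun x hx => le_of_lt ((hconds c hc).1 hx)⟩
  -- restrictions of conditions are conditions
  have hrestrict : ∀ c ∈ Cond, ∀ β : Ordinal, c ∩ Set.Iic β ∈ Cond := by
    intro c hc β
    by_cases h : ∃ y ∈ c, β < y
    · have hS : {y | y ∈ c ∧ β < y}.Nonempty := by
        obtain ⟨y, hy, hβy⟩ := h; exact ⟨y, hy, hβy⟩
      have hmem : sInf {y | y ∈ c ∧ β < y} ∈ {y | y ∈ c ∧ β < y} := csInf_mem hS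
      have heq : c ∩ Set.Iic β = c ∩ Set.Iio (sInf {y | y ∈ c ∧ β < y}) := by
        ext x; simp only [Set.mem_inter_iff, Set.mem_Iic, Set.mem_Iio]
        constructor
        · rintro ⟨hx, hxβ⟩; exact ⟨hx, lt_of_le_of_lt hxβ hmem.2⟩
        · rintro ⟨hx, hxlt⟩
          refine ⟨hx, ?_⟩
          by_contra hc'
          push_neg at hc'
          exact absurd hxlt (not_lt.2 (csInf_le (OrderBot.bddBelow _) ⟨hx, hc'⟩))
      rw [heq]
      exact hinit c hc _ hmem.1
    · push_neg at h
      have hsub : c ⊆ Set.Iic β := fun x hx => h x hx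
      rw [Set.inter_eq_self_of_subset_left hsub]
      exact hc
  -- the recursion producing a least deciding point
  have R : ∀ (i : Ordinal), i < γ → ∀ (β₁ : Ordinal) (c : Set Ordinal) (b : B.P),
      c ∈ Cond → β₁ ≤ sSup c → (∃ β', g (c ∩ Set.Iic β₁, b) i β') →
      ∃ b'' β₀, B.le b'' b ∧ GName κ B γ g (c, b'') i β₀ := by
    intro i hi β₁
    induction β₁ using Ordinal.induction with
    | h β₁ IH =>
      intro c b hc hβ₁ hdec
      by_cases hm : ∃ β'' < β₁, ∃ b', B.le b' b ∧ ∃ β', g (c ∩ Set.Iic β'', b') i β'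
      · obtain ⟨β'', hβ'', b', hb', hdec'⟩ := hm
        obtain ⟨b'', β₀, hb'', hG⟩ := IH β'' hβ'' c b' hc ((le_of_lt hβ'').trans hβ₁) hdec'
        exact ⟨b'', β₀, B.le_trans _ _ _ hb'' hb', hG⟩
      · push_neg at hm
        refine ⟨b, β₁, B.le_refl b, hi, lt_of_le_of_lt hβ₁ (hconds c hc).2.1, hβ₁, hdec, ?_⟩
        intro β'' hβ'' b' hb' hdec'
        obtain ⟨β', hβ'⟩ := hdec'
        exact hm β'' hβ'' b' hb' β' hβ'
  -- GName satisfies the hypotheses of hcof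
  have Gmono : ∀ (r s : Set Ordinal × B.P) (i β : Ordinal), r.1 ∈ Cond → s.1 ∈ Cond →
      PairLe B r s → GName κ B γ g s i β → GName κ B γ g r i β := by
    intro r s i β hrC hsC hrs hG
    obtain ⟨hi, hβκ, hβs, ⟨β', hβ'⟩, hleast⟩ := hG
    refine ⟨hi, hβκ, hβs.trans (csSup_le_csSup' (hbdd _ hrC) hrs.1.1), ?_, ?_⟩
    · refine ⟨β', ?_⟩
      rw [my_restrict_eq hrs.1 hβs]
      exact hmono (s.1 ∩ Set.Iic β, r.2) (s.1 ∩ Set.Iic β, s.2) i β'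
        (hrestrict _ hsC β) (hrestrict _ hsC β)
        ⟨my_endext_refl ((hbdd _ hsC).mono Set.inter_subset_left), hrs.2⟩ hβ'
    · intro β'' hβ'' b' hb'
      rw [my_restrict_eq hrs.1 ((le_of_lt hβ'').trans hβs)]
      exact hleast β'' hβ'' b' (B.le_trans b' r.2 s.2 hb' hrs.2)
  have Gbd : ∀ (q : Set Ordinal × B.P) (i β : Ordinal),
      GName κ B γ g q i β → i < γ ∧ β < κ.ord := fun _ _ _ h => ⟨h.1, h.2.1⟩
  have Guniq : ∀ (q : Set Ordinal × B.P) (i β β' : Ordinal),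
      GName κ B γ g q i β → GName κ B γ g q i β' → β = β' := by
    intro q i β β' h h'
    rcases lt_trichotomy β β' with hlt' | heq | hlt'
    · exact absurd h.2.2.2.1 (h'.2.2.2.2 β hlt' q.2 (B.le_refl _))
    · exact heq
    · exact absurd h'.2.2.2.1 (h.2.2.2.2 β' hlt' q.2 (B.le_refl _))
  have Gdense : ∀ q : Set Ordinal × B.P, q.1 ∈ Cond → ∀ i, i < γ →
      ∃ r, r.1 ∈ Cond ∧ PairLe B r q ∧ ∃ β, GName κ B γ g r i β := by
    intro q₀ hq₀ i hi
    obtain ⟨r, hrC, hrq, β', hβ'⟩ := hdense q₀ hq₀ i hi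
    have hdec : ∃ β'', g (r.1 ∩ Set.Iic (sSup r.1), r.2) i β'' := by
      rw [my_inter_Iic_sSup (hbdd _ hrC)]
      exact ⟨β', hβ'⟩
    obtain ⟨b'', β₀, hb'', hG⟩ := R i hi (sSup r.1) r.1 r.2 hrC le_rfl hdec
    exact ⟨(r.1, b''), hrC, ⟨hrq.1, B.le_trans _ _ _ hb'' hrq.2⟩, β₀, hG⟩
  obtain ⟨q, hqC, hqp, δ, hδ, hbound⟩ :=
    hcof γ hγ (GName κ B γ g) Gmono Gbd Guniq Gdense p hp
  obtain ⟨d, hdC, hdq, hδd⟩ := hext q.1 hqC δ hδ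
  -- key lemma: values at extensions of (d, q.2) propagate to d (with some stronger B-part)
  have L : ∀ i, i < γ → ∀ (c : Set Ordinal) (b : B.P) (β : Ordinal), c ∈ Cond →
      PairLe B (c, b) (d, q.2) → g (c, b) i β →
      ∃ b'', B.le b'' b ∧ g (d, b'') i β := by
    intro i hi c b β hcC hle hg
    have hdec : ∃ β', g (c ∩ Set.Iic (sSup c), b) i β' := by
      rw [my_inter_Iic_sSup (hbdd _ hcC)]
      exact ⟨β, hg⟩
    obtain ⟨b'', β₀, hb'', hG⟩ := R i hi (sSup c) c b hcC le_rfl hdec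
    have hcd : EndExt c d := hle.1
    have hcq1 : EndExt c q.1 := my_endext_trans (hbdd c hcC) hcd hdq
    have hleq : PairLe B (c, b'') q := ⟨hcq1, B.le_trans _ _ _ hb'' hle.2⟩
    have hβ₀δ : β₀ < δ := hbound (c, b'') i β₀ hcC hleq hG
    obtain ⟨-, -, hβ₀c, ⟨β', hβ'⟩, -⟩ := hG
    have heq : c ∩ Set.Iic β₀ = d ∩ Set.Iic β₀ := my_restrict_eq hcd ((le_of_lt hβ₀δ).trans hδd)
    have h1 : g (c, b'') i β' :=
      hmono (c, b'') (c ∩ Set.Iic β₀, b'') i β' hcC (hrestrict c hcC β₀)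
        ⟨my_endext_restrict (hbdd c hcC) β₀, B.le_refl _⟩ hβ'
    have h2 : g (c, b'') i β :=
      hmono (c, b'') (c, b) i β hcC hcC ⟨my_endext_refl (hbdd c hcC), hb''⟩ hg
    have hββ' : β' = β := huniq _ _ _ _ h1 h2
    have hd' : g (d ∩ Set.Iic β₀, b'') i β' := by rw [← heq]; exact hβ'
    have h3 : g (d, b'') i β' :=
      hmono (d, b'') (d ∩ Set.Iic β₀, b'') i β' hdC (hrestrict d hdC β₀)
        ⟨my_endext_restrict (hbdd d hdC) β₀, B.le_refl _⟩ hd'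
    exact ⟨b'', hb'', hββ' ▸ h3⟩
  refine ⟨(d, q.2), hdC, ⟨my_endext_trans (hbdd d hdC) hdq hqp.1, hqp.2⟩, ?_⟩
  intro i hi c₁ c₂ b β₁ β₂ hc₁ hc₂ h1 h2 hg1 hg2
  obtain ⟨b₁, hb₁, hd₁⟩ := L i hi c₁ b β₁ hc₁ h1 hg1
  have hg2' : g (c₂, b₁) i β₂ :=
    hmono (c₂, b₁) (c₂, b) i β₂ hc₂ hc₂ ⟨my_endext_refl (hbdd c₂ hc₂), hb₁⟩ hg2
  have h2' : PairLe B (c₂, b₁) (d, q.2) := ⟨h2.1, B.le_trans _ _ _ hb₁ h2.2⟩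
  obtain ⟨b₂, hb₂, hd₂⟩ := L i hi c₂ b₁ β₂ hc₂ h2' hg2'
  have hd₁' : g (d, b₂) i β₁ :=
    hmono (d, b₂) (d, b₁) i β₁ hdC hdC ⟨my_endext_refl (hbdd d hdC), hb₂⟩ hd₁
  exact huniq (d, b₂) i β₁ β₂ hd₁' hd₂
end
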